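/- Existence of a global barrier: There exist positive constants C > 0 and M > 1, depending only on λ and Λ, such that for every y = (y1, 0) ∈ ℝ² and every r > 0 there exist a C² function φ̃ : ℝ² → ℝ and a continuous function ζ : ℝ² → [0,1] with support contained in the closure of G̃(y,r), satisfying: (i) φ̃ ≥ 0 on ℝ² \ G̃(y,2r); (ii) φ̃ ≤ −2 on G̃(y,r); (iii) φ̃ ≥ −M on ℝ²; and (iv) Lφ̃(x) ≤ C · x1² · ζ(x) / ( r² (r+|y1|)² ) for every x ∈ ℝ², for every choice of coefficients a11, a12, a22 satisfying the uniform ellipticity condition with constants λ, Λ. -/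

import Mathlib

/-!
Write `w = (r · max(r, |y₁|))²` and `s = ρ(x, (y₁, 0))⁴ / w`, so that `G̃(y, r) = {s < 1}` and
`s ≥ 4` off `G̃(y, 2r)`; take `φ̃ = f(s)` with `f(s) = a - b (s + c)^(-β)`, normalized by
`f 1 = -2` and `f 4 = 0`. As `s` is a polynomial, the chain rule and ellipticity give
`L f(s) ≤ (4x₁²/w) (4λ s f''(s) + 5Λ f'(s))`: the weighted gradient `(∂₁s, x₁∂₂s)` has squared
length `16 x₁² s / w` and `L s ≤ 20 Λ x₁² / w`. With `β = 5Λ/(4λ)` and `c = 2λ/(5Λ)` the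
one-dimensional expression is a positive multiple of `(s + c)^(-β-2) (1 - 2s)`, which is `≤ 0`
for `s ≥ 1/2` and bounded by its value at `s = 0` elsewhere, where `ζ = clamp(2 - 2s, 0, 1) = 1`.
-/

open MeasureTheory Real Set

noncomputable section

/-- First partial derivative in the `x₁` direction. -/
def d1 (u : ℝ × ℝ → ℝ) (x : ℝ × ℝ) : ℝ := fderiv ℝ u x (1, 0)

/-- First partial derivative in the `x₂` direction. -/
def d2 (u : ℝ × ℝ → ℝ) (x : ℝ × ℝ) : ℝ := fderiv ℝ u x (0, 1)

/-- The Grushin-type operator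
`Lu = a₁₁ ∂₁₁ u + 2 a₁₂ x₁ ∂₁₂ u + a₂₂ x₁² ∂₂₂ u`. -/
def Lop (a11 a12 a22 : ℝ × ℝ → ℝ) (u : ℝ × ℝ → ℝ) (x : ℝ × ℝ) : ℝ :=
  a11 x * d1 (d1 u) x + 2 * a12 x * x.1 * d2 (d1 u) x + a22 x * x.1 ^ 2 * d2 (d2 u) x

/-- Uniform ellipticity with constants `lam ≤ Lam`. -/
def IsElliptic (lam Lam : ℝ) (a11 a12 a22 : ℝ × ℝ → ℝ) : Prop :=
  ∀ x ξ : ℝ × ℝ,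
    lam * (ξ.1 ^ 2 + ξ.2 ^ 2) ≤ a11 x * ξ.1 ^ 2 + 2 * a12 x * ξ.1 * ξ.2 + a22 x * ξ.2 ^ 2 ∧
      a11 x * ξ.1 ^ 2 + 2 * a12 x * ξ.1 * ξ.2 + a22 x * ξ.2 ^ 2 ≤ Lam * (ξ.1 ^ 2 + ξ.2 ^ 2)

/-- The quasi distance `d̃`. -/
def qdist (x y : ℝ × ℝ) : ℝ :=
  |x.1 - y.1| + Real.sqrt (x.1 ^ 2 + y.1 ^ 2 + 4 * |x.2 - y.2|) - Real.sqrt (x.1 ^ 2 + y.1 ^ 2)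

/-- Quasi metric ball for `d̃`. -/
def Bq (y : ℝ × ℝ) (r : ℝ) : Set (ℝ × ℝ) := {x | qdist x y < r}

/-- The boxes of Franchi–Lanconelli. -/
def Box (y : ℝ × ℝ) (r : ℝ) : Set (ℝ × ℝ) :=
  {x | |x.1 - y.1| < r ∧ |x.2 - y.2| < r * (|y.1| + r)}

/-- The gauge `ρ(x,y) = ((x₁²−y₁²)² + 4(x₂−y₂)²)^{1/4}`. -/
def grho (x y : ℝ × ℝ) : ℝ :=
  ((x.1 ^ 2 - y.1 ^ 2) ^ 2 + 4 * (x.2 - y.2) ^ 2) ^ ((1 : ℝ) / 4)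

/-- Sublevel set `G(y,r) = {x : g_r(x,y) < r}` of the gauge function `g_r`. -/
def Gset (y : ℝ × ℝ) (r : ℝ) : Set (ℝ × ℝ) :=
  {x | (|y.1| < r ∧ grho x y < r) ∨
    (r ≤ |y.1| ∧ 0 ≤ x.1 * y.1 ∧ grho x y ^ 2 / |y.1| < r)}

/-- Sublevel set `G̃(y,r) = {x : g̃_r(x,y) < r}` of the gauge function `g̃_r`. -/
def Gtil (y : ℝ × ℝ) (r : ℝ) : Set (ℝ × ℝ) :=
  {x | (|y.1| < r ∧ grho x y < r) ∨ (r ≤ |y.1| ∧ grho x y ^ 2 / |y.1| < r)}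

/-- Reflection with respect to the `x₂` axis. -/
def Sref (x : ℝ × ℝ) : ℝ × ℝ := (-x.1, x.2)

/-- Symmetrized quasi metric ball `B̃(y,r) = B(y,r) ∪ B(S(y),r)`. -/
def Btil (y : ℝ × ℝ) (r : ℝ) : Set (ℝ × ℝ) := Bq y r ∪ Bq (Sref y) r

/-- The Euclidean diameter of a subset of `ℝ × ℝ`. -/
def euclDiam (s : Set (ℝ × ℝ)) : ℝ :=
  sSup {d | ∃ x ∈ s, ∃ y ∈ s, d = Real.sqrt ((x.1 - y.1) ^ 2 + (x.2 - y.2) ^ 2)}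

/-- The Euclidean ball of center `z` and radius `r` in `ℝ × ℝ`. -/
def euclBall (z : ℝ × ℝ) (r : ℝ) : Set (ℝ × ℝ) :=
  {x | Real.sqrt ((x.1 - z.1) ^ 2 + (x.2 - z.2) ^ 2) < r}

/-- The convex envelope of `w` on a set `E`: the sup of all affine functions
lying below `w` on `E`. -/
def convEnv (w : ℝ × ℝ → ℝ) (E : Set (ℝ × ℝ)) (x : ℝ × ℝ) : ℝ :=
  sSup {t | ∃ p : ℝ × ℝ, ∃ c : ℝ,
    (∀ z ∈ E, p.1 * z.1 + p.2 * z.2 + c ≤ w z) ∧ t = p.1 * x.1 + p.2 * x.2 + c}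

open ContinuousLinearMap

section Calculus

variable {a11 a12 a22 : ℝ × ℝ → ℝ}

theorem d1_comp {F : ℝ → ℝ} {F' : ℝ} {T : ℝ × ℝ → ℝ} {x : ℝ × ℝ} (hF : HasDerivAt F F' (T x))
    (hT : DifferentiableAt ℝ T x) : d1 (fun z => F (T z)) x = F' * d1 T x := by
  have h : HasFDerivAt (fun z => F (T z)) (F' • fderiv ℝ T x) x :=
    hF.comp_hasFDerivAt x hT.hasFDerivAt
  simp [d1, h.fderiv]

theorem d2_comp {F : ℝ → ℝ} {F' : ℝ} {T : ℝ × ℝ → ℝ} {x : ℝ × ℝ} (hF : HasDerivAt F F' (T x))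
    (hT : DifferentiableAt ℝ T x) : d2 (fun z => F (T z)) x = F' * d2 T x := by
  have h : HasFDerivAt (fun z => F (T z)) (F' • fderiv ℝ T x) x :=
    hF.comp_hasFDerivAt x hT.hasFDerivAt
  simp [d2, h.fderiv]

theorem d1_mul {f g : ℝ × ℝ → ℝ} {x : ℝ × ℝ} (hf : DifferentiableAt ℝ f x)
    (hg : DifferentiableAt ℝ g x) : d1 (fun z => f z * g z) x = d1 f x * g x + f x * d1 g x := by
  rw [d1, d1, d1, fderiv_fun_mul hf hg]
  simp
  ring

theorem d2_mul {f g : ℝ × ℝ → ℝ} {x : ℝ × ℝ} (hf : DifferentiableAt ℝ f x)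
    (hg : DifferentiableAt ℝ g x) : d2 (fun z => f z * g z) x = d2 f x * g x + f x * d2 g x := by
  rw [d2, d2, d2, fderiv_fun_mul hf hg]
  simp
  ring

theorem Lop_comp {F F' F'' : ℝ → ℝ} {T : ℝ × ℝ → ℝ} {x : ℝ × ℝ}
    (hF : ∀ z, HasDerivAt F (F' (T z)) (T z)) (hF' : HasDerivAt F' (F'' (T x)) (T x))
    (hT : Differentiable ℝ T) (hT1 : DifferentiableAt ℝ (d1 T) x)
    (hT2 : DifferentiableAt ℝ (d2 T) x) :
    Lop a11 a12 a22 (fun z => F (T z)) x =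
      F'' (T x) * (a11 x * d1 T x ^ 2 + 2 * a12 x * d1 T x * (x.1 * d2 T x)
        + a22 x * (x.1 * d2 T x) ^ 2) + F' (T x) * Lop a11 a12 a22 T x := by
  have h1 : d1 (fun z => F (T z)) = fun z => F' (T z) * d1 T z :=
    funext fun z => d1_comp (hF z) (hT z)
  have h2 : d2 (fun z => F (T z)) = fun z => F' (T z) * d2 T z :=
    funext fun z => d2_comp (hF z) (hT z)
  have hF'T : DifferentiableAt ℝ (fun z => F' (T z)) x :=
    (hF'.comp_hasFDerivAt x (hT x).hasFDerivAt).differentiableAt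
  simp only [Lop, h1, h2, d1_mul hF'T hT1, d2_mul hF'T hT1, d2_mul hF'T hT2,
    d1_comp hF' (hT x), d2_comp hF' (hT x)]
  ring

end Calculus

/-- For `q = y₁²` this is `ρ(x, (y₁, 0))⁴ / w`; working with `ρ⁴` keeps the gauge polynomial. -/
def grushinGauge (q w : ℝ) (x : ℝ × ℝ) : ℝ := ((x.1 ^ 2 - q) ^ 2 + 4 * x.2 ^ 2) / w

section Gauge

variable {q w : ℝ}

theorem grushinGauge_nonneg (hw : 0 < w) (x : ℝ × ℝ) : 0 ≤ grushinGauge q w x := by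
  unfold grushinGauge; positivity

theorem contDiff_grushinGauge {n : WithTop ℕ∞} : ContDiff ℝ n (grushinGauge q w) := by
  unfold grushinGauge; fun_prop

theorem hasFDerivAt_grushinGauge (x : ℝ × ℝ) :
    HasFDerivAt (grushinGauge q w)
      ((4 * (x.1 ^ 2 - q) * x.1 / w) • fst ℝ ℝ ℝ + (8 * x.2 / w) • snd ℝ ℝ ℝ) x := by
  have h1 : HasFDerivAt (fun x : ℝ × ℝ => x.1) (fst ℝ ℝ ℝ) x := hasFDerivAt_fst
  have h2 : HasFDerivAt (fun x : ℝ × ℝ => x.2) (snd ℝ ℝ ℝ) x := hasFDerivAt_snd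
  refine (((((h1.pow 2).sub_const q).pow 2).fun_add ((h2.pow 2).const_mul 4)).mul_const
    w⁻¹).congr_fderiv ?_
  ext <;> simp <;> ring

theorem d1_grushinGauge : d1 (grushinGauge q w) = fun x => 4 * (x.1 ^ 2 - q) * x.1 / w := by
  ext x
  simp [d1, (hasFDerivAt_grushinGauge x).fderiv]

theorem d2_grushinGauge : d2 (grushinGauge q w) = fun x => 8 * x.2 / w := by
  ext x
  simp [d2, (hasFDerivAt_grushinGauge x).fderiv]

theorem Lop_grushinGauge (a11 a12 a22 : ℝ × ℝ → ℝ) (x : ℝ × ℝ) :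
    Lop a11 a12 a22 (grushinGauge q w) x =
      (4 * a11 x * (3 * x.1 ^ 2 - q) + 8 * a22 x * x.1 ^ 2) / w := by
  have h1 : HasFDerivAt (fun x : ℝ × ℝ => x.1) (fst ℝ ℝ ℝ) x := hasFDerivAt_fst
  have h2 : HasFDerivAt (fun x : ℝ × ℝ => x.2) (snd ℝ ℝ ℝ) x := hasFDerivAt_snd
  have hd1 : HasFDerivAt (d1 (grushinGauge q w)) ((4 * (3 * x.1 ^ 2 - q) / w) • fst ℝ ℝ ℝ) x := by
    rw [d1_grushinGauge]
    refine ((((h1.pow 2).sub_const q).const_mul 4).mul h1 |>.mul_const w⁻¹).congr_fderiv ?_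
    ext <;> simp
    ring
  have hd2 : HasFDerivAt (d2 (grushinGauge q w)) ((8 / w) • snd ℝ ℝ ℝ) x := by
    rw [d2_grushinGauge]
    refine ((h2.const_mul 8).mul_const w⁻¹).congr_fderiv ?_
    ext <;> simp
    ring
  simp [Lop, d1, d2, hd1.fderiv, hd2.fderiv]
  ring

end Gauge

section Elliptic

variable {lam Lam : ℝ} {a11 a12 a22 : ℝ × ℝ → ℝ}

theorem IsElliptic.le_a11 (h : IsElliptic lam Lam a11 a12 a22) (x : ℝ × ℝ) : lam ≤ a11 x := by
  simpa using (h x (1, 0)).1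

theorem IsElliptic.a11_le (h : IsElliptic lam Lam a11 a12 a22) (x : ℝ × ℝ) : a11 x ≤ Lam := by
  simpa using (h x (1, 0)).2

theorem IsElliptic.a22_le (h : IsElliptic lam Lam a11 a12 a22) (x : ℝ × ℝ) : a22 x ≤ Lam := by
  simpa using (h x (0, 1)).2

theorem IsElliptic.Lop_comp_grushinGauge_le (hell : IsElliptic lam Lam a11 a12 a22) (hlam : 0 ≤ lam)
    {q w : ℝ} (hq : 0 ≤ q) (hw : 0 < w) {f f' f'' : ℝ → ℝ}
    (hf : ∀ s, 0 ≤ s → HasDerivAt f (f' s) s) (hf' : ∀ s, 0 ≤ s → HasDerivAt f' (f'' s) s)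
    (hf'_nonneg : ∀ s, 0 ≤ s → 0 ≤ f' s) (hf''_nonpos : ∀ s, 0 ≤ s → f'' s ≤ 0) (x : ℝ × ℝ) :
    Lop a11 a12 a22 (fun z => f (grushinGauge q w z)) x ≤
      4 * x.1 ^ 2 / w * (4 * lam * grushinGauge q w x * f'' (grushinGauge q w x)
        + 5 * Lam * f' (grushinGauge q w x)) := by
  have hs := grushinGauge_nonneg (q := q) hw
  have hdiff : Differentiable ℝ (grushinGauge q w) :=
    contDiff_grushinGauge.differentiable one_ne_zero
  rw [Lop_comp (fun z => hf _ (hs z)) (hf' _ (hs x)) hdiff (by rw [d1_grushinGauge]; fun_prop)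
    (by rw [d2_grushinGauge]; fun_prop), Lop_grushinGauge, d1_grushinGauge, d2_grushinGauge]
  set s := grushinGauge q w x with hs_def
  have hgrad : (4 * (x.1 ^ 2 - q) * x.1 / w) ^ 2 + (x.1 * (8 * x.2 / w)) ^ 2
      = 16 * x.1 ^ 2 * s / w := by
    rw [hs_def, grushinGauge]; field_simp; ring
  have hQ := (hell x (4 * (x.1 ^ 2 - q) * x.1 / w, x.1 * (8 * x.2 / w))).1
  rw [hgrad] at hQ
  have htrace : (4 * a11 x * (3 * x.1 ^ 2 - q) + 8 * a22 x * x.1 ^ 2) / w ≤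
      20 * Lam * x.1 ^ 2 / w := by
    gcongr
    nlinarith [hell.a11_le x, hell.a22_le x, hell.le_a11 x, sq_nonneg x.1]
  calc _ ≤ f'' s * (lam * (16 * x.1 ^ 2 * s / w)) + f' s * (20 * Lam * x.1 ^ 2 / w) :=
        add_le_add (mul_le_mul_of_nonpos_left hQ (hf''_nonpos s (hs x)))
          (mul_le_mul_of_nonneg_left htrace (hf'_nonneg s (hs x)))
    _ = _ := by ring

end Elliptic

def barrierGap (β c : ℝ) : ℝ := (1 + c) ^ (-β) - (4 + c) ^ (-β)

def barrierProfile (β c s : ℝ) : ℝ := 2 * ((4 + c) ^ (-β) - (s + c) ^ (-β)) / barrierGap β c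

def barrierProfile' (β c s : ℝ) : ℝ := 2 * β * (s + c) ^ (-β - 1) / barrierGap β c

def barrierProfile'' (β c s : ℝ) : ℝ := -(2 * β * (β + 1) * (s + c) ^ (-β - 2) / barrierGap β c)

def barrierCutoff (s : ℝ) : ℝ := max 0 (min 1 (2 - 2 * s))

theorem barrierCutoff_nonneg (s : ℝ) : 0 ≤ barrierCutoff s := le_max_left _ _

theorem barrierCutoff_le_one (s : ℝ) : barrierCutoff s ≤ 1 := max_le zero_le_one (min_le_left _ _)

theorem barrierCutoff_eq_one {s : ℝ} (hs : s ≤ 1 / 2) : barrierCutoff s = 1 := by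
  rw [barrierCutoff, min_eq_left (by linarith), max_eq_right zero_le_one]

theorem lt_one_of_barrierCutoff_ne_zero {s : ℝ} (hs : barrierCutoff s ≠ 0) : s < 1 := by
  contrapose! hs
  exact max_eq_left ((min_le_right _ _).trans (by linarith))

theorem continuous_barrierCutoff : Continuous barrierCutoff := by
  unfold barrierCutoff; fun_prop

section Profile

variable {β c : ℝ}

theorem barrierGap_pos (hβ : 0 < β) (hc : 0 < c) : 0 < barrierGap β c :=
  sub_pos.2 (rpow_lt_rpow_of_neg (by linarith) (by linarith) (neg_neg_of_pos hβ))

theorem barrierGap_lt (hβ : 0 < β) (hc : 0 < c) : barrierGap β c < c ^ (-β) := by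
  have h1 : (1 + c) ^ (-β) < c ^ (-β) := rpow_lt_rpow_of_neg hc (by linarith) (neg_neg_of_pos hβ)
  have h4 : 0 < (4 + c) ^ (-β) := by positivity
  unfold barrierGap; linarith

theorem barrierProfile_one (hβ : 0 < β) (hc : 0 < c) : barrierProfile β c 1 = -2 := by
  have := barrierGap_pos hβ hc
  unfold barrierProfile
  rw [div_eq_iff this.ne', barrierGap]
  ring

theorem barrierProfile_four : barrierProfile β c 4 = 0 := by
  simp [barrierProfile]

theorem barrierProfile_mono (hβ : 0 < β) (hc : 0 < c) {s t : ℝ} (hs : 0 ≤ s) (hst : s ≤ t) :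
    barrierProfile β c s ≤ barrierProfile β c t := by
  have : (t + c) ^ (-β) ≤ (s + c) ^ (-β) :=
    rpow_le_rpow_of_nonpos (by linarith) (by linarith) (neg_nonpos.2 hβ.le)
  exact div_le_div_of_nonneg_right (by linarith) (barrierGap_pos hβ hc).le

theorem neg_le_barrierProfile (hβ : 0 < β) (hc : 0 < c) {s : ℝ} (hs : 0 ≤ s) :
    -(2 * c ^ (-β) / barrierGap β c) ≤ barrierProfile β c s := by
  have hsc : (s + c) ^ (-β) ≤ c ^ (-β) :=
    rpow_le_rpow_of_nonpos hc (by linarith) (neg_nonpos.2 hβ.le)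
  have h4 : 0 ≤ (4 + c) ^ (-β) := by positivity
  rw [barrierProfile, ← neg_div, div_le_div_iff_of_pos_right (barrierGap_pos hβ hc)]
  linarith

theorem contDiffAt_barrierProfile {n : WithTop ℕ∞} {s : ℝ} (hs : -c < s) :
    ContDiffAt ℝ n (barrierProfile β c) s := by
  have : ContDiffAt ℝ n (fun t => (t + c) ^ (-β)) s :=
    (contDiffAt_id.add contDiffAt_const).rpow_const_of_ne (by simp; linarith)
  exact (contDiffAt_const.mul (contDiffAt_const.sub this)).div_const _

theorem hasDerivAt_barrierProfile {s : ℝ} (hs : -c < s) :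
    HasDerivAt (barrierProfile β c) (barrierProfile' β c s) s := by
  have h := ((hasDerivAt_id s).add_const c).rpow_const (p := -β) (Or.inl (by simp; linarith))
  refine ((h.const_sub _).const_mul 2 |>.div_const _).congr_deriv ?_
  simp only [barrierProfile', id]
  ring

theorem hasDerivAt_barrierProfile' {s : ℝ} (hs : -c < s) :
    HasDerivAt (barrierProfile' β c) (barrierProfile'' β c s) s := by
  have h := ((hasDerivAt_id s).add_const c).rpow_const (p := -β - 1) (Or.inl (by simp; linarith))
  refine ((h.const_mul (2 * β)).div_const _).congr_deriv ?_
  simp only [barrierProfile'', id, show -β - 1 - 1 = -β - 2 by ring]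
  ring

theorem barrierProfile'_nonneg (hβ : 0 < β) (hc : 0 < c) {s : ℝ} (hs : 0 ≤ s) :
    0 ≤ barrierProfile' β c s := by
  have := barrierGap_pos hβ hc
  have : 0 < s + c := by linarith
  unfold barrierProfile'; positivity

theorem barrierProfile''_nonpos (hβ : 0 < β) (hc : 0 < c) {s : ℝ} (hs : 0 ≤ s) :
    barrierProfile'' β c s ≤ 0 := by
  have := barrierGap_pos hβ hc
  have : 0 < s + c := by linarith
  unfold barrierProfile''; rw [neg_nonpos]; positivity

theorem barrierProfile_ode_le {lam Lam : ℝ} (hlam : 0 < lam) (hβ : 0 < β) (hc : 0 < c)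
    (hβlam : 4 * lam * β = 5 * Lam) (hcLam : 5 * Lam * c = 2 * lam) {s : ℝ} (hs : 0 ≤ s) :
    4 * lam * s * barrierProfile'' β c s + 5 * Lam * barrierProfile' β c s ≤
      4 * lam * β * c ^ (-β - 2) / barrierGap β c * barrierCutoff s := by
  have hg := barrierGap_pos hβ hc
  have hsc : 0 < s + c := by linarith
  have key : 4 * lam * s * barrierProfile'' β c s + 5 * Lam * barrierProfile' β c s =
      4 * lam * β / barrierGap β c * (s + c) ^ (-β - 2) * (1 - 2 * s) := by
    unfold barrierProfile' barrierProfile''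
    rw [show -β - 1 = -β - 2 + 1 by ring, rpow_add_one hsc.ne']
    field_simp
    -- `4λβ = 5Λ` cancels the `s`-terms of `5Λ (s + c) - 4λ (β + 1) s`, and `5Λc = 2λ` turns the rest into `2λ`
    linear_combination (-2 * s) * hβlam + 2 * hcLam
  rw [key]
  rcases le_or_gt s (1 / 2) with hs' | hs'
  · have : (s + c) ^ (-β - 2) ≤ c ^ (-β - 2) :=
      rpow_le_rpow_of_nonpos hc (by linarith) (by linarith)
    calc _ ≤ 4 * lam * β / barrierGap β c * c ^ (-β - 2) * 1 := by gcongr <;> linarith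
      _ = _ := by rw [barrierCutoff_eq_one hs']; ring
  · exact (mul_nonpos_of_nonneg_of_nonpos (by positivity) (by linarith)).trans
      (mul_nonneg (by positivity) (barrierCutoff_nonneg s))

end Profile

theorem grho_pow_four (x y : ℝ × ℝ) :
    grho x y ^ 4 = (x.1 ^ 2 - y.1 ^ 2) ^ 2 + 4 * (x.2 - y.2) ^ 2 := by
  rw [grho, one_div]
  exact_mod_cast rpow_inv_natCast_pow (by positivity) (by norm_num : 4 ≠ 0)

theorem mem_Gtil_iff {y1 r : ℝ} (hr : 0 < r) (x : ℝ × ℝ) :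
    x ∈ Gtil (y1, 0) r ↔ grho x (y1, 0) ^ 4 < (r * max r |y1|) ^ 2 := by
  have hρ : 0 ≤ grho x (y1, 0) := by unfold grho; positivity
  rcases lt_or_ge |y1| r with hy | hy
  · have : x ∈ Gtil (y1, 0) r ↔ grho x (y1, 0) < r := by simp [Gtil, hy, not_le.2 hy]
    rw [this, max_eq_left hy.le, ← pow_lt_pow_iff_left₀ hρ hr.le (by norm_num : 4 ≠ 0)]
    ring_nf
  · have hy0 : 0 < |y1| := hr.trans_le hy
    have : x ∈ Gtil (y1, 0) r ↔ grho x (y1, 0) ^ 2 < r * |y1| := by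
      simp [Gtil, hy, not_lt.2 hy, div_lt_iff₀ hy0]
    rw [this, max_eq_right hy, ← pow_lt_pow_iff_left₀ (by positivity) (by positivity)
      (by norm_num : 2 ≠ 0)]
    ring_nf

def gtilGauge (y1 r : ℝ) : ℝ × ℝ → ℝ := grushinGauge (y1 ^ 2) ((r * max r |y1|) ^ 2)

theorem gtilGauge_nonneg {y1 r : ℝ} (hr : 0 < r) (x : ℝ × ℝ) : 0 ≤ gtilGauge y1 r x :=
  grushinGauge_nonneg (pow_pos (mul_pos hr (hr.trans_le (le_max_left _ _))) 2) x

theorem gtilGauge_eq (y1 r : ℝ) (x : ℝ × ℝ) :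
    gtilGauge y1 r x = grho x (y1, 0) ^ 4 / (r * max r |y1|) ^ 2 := by
  simp [gtilGauge, grushinGauge, grho_pow_four]

theorem mem_Gtil_iff_gtilGauge_lt_one {y1 r : ℝ} (hr : 0 < r) (x : ℝ × ℝ) :
    x ∈ Gtil (y1, 0) r ↔ gtilGauge y1 r x < 1 := by
  have : 0 < max r |y1| := hr.trans_le (le_max_left _ _)
  rw [mem_Gtil_iff hr, gtilGauge_eq, div_lt_one (by positivity)]

theorem four_le_gtilGauge_of_not_mem_Gtil {y1 r : ℝ} (hr : 0 < r) {x : ℝ × ℝ}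
    (hx : x ∉ Gtil (y1, 0) (2 * r)) : 4 ≤ gtilGauge y1 r x := by
  have hm : 0 < max r |y1| := hr.trans_le (le_max_left _ _)
  have hmax : max r |y1| ≤ max (2 * r) |y1| := max_le_max (by linarith) le_rfl
  rw [mem_Gtil_iff (by linarith), not_lt] at hx
  rw [gtilGauge_eq, le_div_iff₀ (by positivity)]
  calc 4 * (r * max r |y1|) ^ 2 = (2 * r * max r |y1|) ^ 2 := by ring
    _ ≤ (2 * r * max (2 * r) |y1|) ^ 2 := by gcongr
    _ ≤ _ := hx

theorem IsElliptic.Lop_barrier_le {lam Lam : ℝ} {a11 a12 a22 : ℝ × ℝ → ℝ}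
    (hell : IsElliptic lam Lam a11 a12 a22) (hlam : 0 < lam) {β c : ℝ} (hβ : 0 < β) (hc : 0 < c)
    (hβlam : 4 * lam * β = 5 * Lam) (hcLam : 5 * Lam * c = 2 * lam) {y1 r : ℝ} (hr : 0 < r)
    (x : ℝ × ℝ) :
    Lop a11 a12 a22 (fun z => barrierProfile β c (gtilGauge y1 r z)) x ≤
      16 * (4 * lam * β * c ^ (-β - 2) / barrierGap β c) * x.1 ^ 2 *
        barrierCutoff (gtilGauge y1 r x) / (r ^ 2 * (r + |y1|) ^ 2) := by
  set K := 4 * lam * β * c ^ (-β - 2) / barrierGap β c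
  set m := max r |y1|
  have hm : 0 < m := hr.trans_le (le_max_left _ _)
  have hw : 0 < (r * m) ^ 2 := by positivity
  set s := gtilGauge y1 r x
  have hs : 0 ≤ s := gtilGauge_nonneg hr x
  have hscale : 4 / (r * m) ^ 2 ≤ 16 / (r ^ 2 * (r + |y1|) ^ 2) := by
    have : (r + |y1|) ^ 2 ≤ (2 * m) ^ 2 := by
      gcongr; linarith [le_max_left r |y1|, le_max_right r |y1|]
    rw [div_le_div_iff₀ hw (by positivity)]
    nlinarith [mul_le_mul_of_nonneg_left this (sq_nonneg r)]
  have hKζ : 0 ≤ K * x.1 ^ 2 * barrierCutoff s := by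
    have := barrierGap_pos hβ hc
    have := barrierCutoff_nonneg s
    positivity
  calc _ ≤ 4 * x.1 ^ 2 / (r * m) ^ 2 *
        (4 * lam * s * barrierProfile'' β c s + 5 * Lam * barrierProfile' β c s) :=
        hell.Lop_comp_grushinGauge_le hlam.le (sq_nonneg y1) hw
          (fun _ ht => hasDerivAt_barrierProfile (by linarith))
          (fun _ ht => hasDerivAt_barrierProfile' (by linarith))
          (fun _ => barrierProfile'_nonneg hβ hc) (fun _ => barrierProfile''_nonpos hβ hc) x
    _ ≤ 4 * x.1 ^ 2 / (r * m) ^ 2 * (K * barrierCutoff s) := by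
        gcongr
        exact barrierProfile_ode_le hlam hβ hc hβlam hcLam hs
    _ = 4 / (r * m) ^ 2 * (K * x.1 ^ 2 * barrierCutoff s) := by ring
    _ ≤ 16 / (r ^ 2 * (r + |y1|) ^ 2) * (K * x.1 ^ 2 * barrierCutoff s) := by gcongr
    _ = _ := by ring

/-- **Existence of a global barrier** adapted to the sets `G̃(y,r)`. -/
theorem global_barrier (lam Lam : ℝ) (hlam : 0 < lam) (hLam : lam ≤ Lam) :
    ∃ C > (0 : ℝ), ∃ M > (1 : ℝ), ∀ y1 : ℝ, ∀ r > (0 : ℝ),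
      ∃ φ ζ : ℝ × ℝ → ℝ,
        ContDiff ℝ 2 φ ∧
        Continuous ζ ∧ (∀ x, 0 ≤ ζ x ∧ ζ x ≤ 1) ∧
        tsupport ζ ⊆ closure (Gtil (y1, 0) r) ∧
        (∀ x ∉ Gtil (y1, 0) (2 * r), 0 ≤ φ x) ∧
        (∀ x ∈ Gtil (y1, 0) r, φ x ≤ -2) ∧
        (∀ x : ℝ × ℝ, -M ≤ φ x) ∧
        (∀ a11 a12 a22 : ℝ × ℝ → ℝ, IsElliptic lam Lam a11 a12 a22 →
          ∀ x : ℝ × ℝ,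
            Lop a11 a12 a22 φ x ≤ C * x.1 ^ 2 * ζ x / (r ^ 2 * (r + |y1|) ^ 2)) := by
  have hLam0 : 0 < Lam := hlam.trans_le hLam
  set β := 5 * Lam / (4 * lam)
  set c := 2 * lam / (5 * Lam)
  have hβ : 0 < β := by positivity
  have hc : 0 < c := by positivity
  have hβlam : 4 * lam * β = 5 * Lam := by simp only [β]; field_simp
  have hcLam : 5 * Lam * c = 2 * lam := by simp only [c]; field_simp
  have hg := barrierGap_pos hβ hc
  refine ⟨16 * (4 * lam * β * c ^ (-β - 2) / barrierGap β c), by positivity,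
    2 * c ^ (-β) / barrierGap β c, ?_, fun y1 r hr => ?_⟩
  · rw [gt_iff_lt, lt_div_iff₀ hg]
    linarith [barrierGap_lt hβ hc]
  have hs := gtilGauge_nonneg (y1 := y1) hr
  refine ⟨fun x => barrierProfile β c (gtilGauge y1 r x), fun x => barrierCutoff (gtilGauge y1 r x),
    contDiff_iff_contDiffAt.2 fun x =>
      (contDiffAt_barrierProfile (by linarith [hs x])).comp x contDiff_grushinGauge.contDiffAt,
    continuous_barrierCutoff.comp (contDiff_grushinGauge (n := 0)).continuous,
    fun x => ⟨barrierCutoff_nonneg _, barrierCutoff_le_one _⟩,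
    closure_mono fun x hx => (mem_Gtil_iff_gtilGauge_lt_one hr x).2
      (lt_one_of_barrierCutoff_ne_zero hx),
    fun x hx => barrierProfile_four (β := β) (c := c) ▸
      barrierProfile_mono hβ hc (by norm_num) (four_le_gtilGauge_of_not_mem_Gtil hr hx),
    fun x hx => barrierProfile_one hβ hc ▸
      barrierProfile_mono hβ hc (hs x) ((mem_Gtil_iff_gtilGauge_lt_one hr x).1 hx).le,
    fun x => neg_le_barrierProfile hβ hc (hs x),
    fun a11 a12 a22 hell => hell.Lop_barrier_le hlam hβ hc hβlam hcLam hr⟩
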